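/- arXiv:2504.12611 — 2 statements merged into one kernel-verified Lean document; each statement's English description precedes it below -/
import Mathlib

section
/- Existence of false minima for the unbalanced quadratic penalty: there exist a linear objective f, a linear constraint h on {0,1}^n, and penalty coefficients λ_1, λ_2 > 0 such that the minimizer of L_unb(x) = f(x) + λ_1 h(x) + λ_2 h(x)² over {0,1}^n is infeasible (h > 0 at the minimizer) or is not a minimizer of f over the feasible set {x : h(x) ≤ 0}, even though a feasible point exists. -/
/-!
One bit suffices. Take the constraint `h(x) = x`, feasible only at `x = 0`, and the objective
`f(x) = a x`. Since `x² = x` on a bit, the penalty loss collapses to the linear function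
`L_unb(x) = (a + λ₁ + λ₂) x`, so once the objective rewards the bit more than both penalty
terms charge for it (`a + λ₁ + λ₂ < 0`) the infeasible point `x = 1` is the unique minimizer.
-/

lemma Fin.two_cast_sq (b : Fin 2) : ((b : ℕ) : ℝ) ^ 2 = (b : ℕ) := by
  fin_cases b <;> norm_num

lemma Fin.two_cast_le_one (b : Fin 2) : ((b : ℕ) : ℝ) ≤ 1 := by
  fin_cases b <;> norm_num

/-- existence of false minima for the unbalanced quadratic penalty.
There exist `n`, a linear objective `f(x) = Σ_j α_j x_j + β`, a linear constraint
`h(x) = Σ_j γ_j x_j − δ`, and penalty coefficients `λ₁, λ₂ > 0`, such that a feasible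
point exists but some minimizer of `L_unb(x) = f(x) + λ₁ h(x) + λ₂ h(x)²` over
`{0,1}^n` is infeasible or is not a minimizer of `f` over the feasible set. -/
theorem unbalanced_penalty_false_minimum :
    ∃ (n : ℕ) (α γ : Fin n → ℝ) (β δ lam₁ lam₂ : ℝ),
      lam₁ > 0 ∧ lam₂ > 0 ∧
      (let f : (Fin n → Fin 2) → ℝ := fun x => (∑ j, α j * ((x j : ℕ) : ℝ)) + β
       let h : (Fin n → Fin 2) → ℝ := fun x => (∑ j, γ j * ((x j : ℕ) : ℝ)) - δ
       let Lunb : (Fin n → Fin 2) → ℝ := fun x => f x + lam₁ * h x + lam₂ * (h x) ^ 2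
       (∃ y, h y ≤ 0) ∧
       ∃ x, (∀ y, Lunb x ≤ Lunb y) ∧
         (h x > 0 ∨ ¬(h x ≤ 0 ∧ ∀ y, h y ≤ 0 → f x ≤ f y))) := by
  refine ⟨1, fun _ => -3, fun _ => 1, 0, 0, 1, 1, one_pos, one_pos, ?_⟩
  simp only [Fin.sum_univ_one, one_mul, add_zero, sub_zero]
  refine ⟨⟨fun _ => 0, by simp⟩, fun _ => 1, fun y => ?_, Or.inl (by simp)⟩
  simp only [Fin.two_cast_sq]
  have := Fin.two_cast_le_one (y 0)
  norm_num
  linarith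
end

section
/- Minimizing the slack-penalized loss recovers the constrained optimum: let f : {0,1}^n → ℝ, let a_j ≥ 0, b ≥ 0 be integers with 2^N > b, and λ > max f − min f. Then min over (x,y) ∈ {0,1}^n × {0,1}^N of L(x,y) = f(x) + λ (Σ_j a_j x_j + Σ_l 2^l y_l − b)² equals min{ f(x) : Σ_j a_j x_j ≤ b }, provided the feasible set is nonempty, and every minimizing (x,y) has x feasible. -/
/-!
Since the coefficients are integers, the residual `Σ_j a_j x_j + Σ_l 2^l y_l − b` is an
integer, so wherever it is nonzero the penalty costs at least `λ`, which exceeds the whole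
range of `f`. Where it vanishes, `x` is feasible and the loss is `f x`; conversely every
feasible `x` has a slack `b − Σ_j a_j x_j ∈ [0, 2^N)`, which is written in binary by some
`y`. Hence a feasible minimizer of `f` with its slack minimizes the loss, and every minimizer
of the loss has zero residual.
-/

open Finset

theorem exists_sum_two_pow_mul_eq {N : ℕ} {s : ℤ} (hs₀ : 0 ≤ s) (hs : s < 2 ^ N) :
    ∃ y : Fin N → Fin 2, ∑ l : Fin N, (2 : ℤ) ^ (l : ℕ) * ((y l : ℕ) : ℤ) = s := by
  lift s to ℕ using hs₀
  set y := finFunctionFinEquiv.symm (⟨s, by exact_mod_cast hs⟩ : Fin (2 ^ N))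
  refine ⟨y, ?_⟩
  calc _ = ((∑ l, (y l : ℕ) * 2 ^ (l : ℕ) : ℕ) : ℤ) := by
        push_cast
        exact sum_congr rfl fun _ _ => mul_comm _ _
    _ = s := by rw [← finFunctionFinEquiv_apply, Equiv.apply_symm_apply]

section ExactPenalty

variable {X Y : Type*} (f : X → ℝ) (r : X → Y → ℤ) (lam : ℝ)

def penalizedLoss (p : X × Y) : ℝ :=
  f p.1 + lam * (r p.1 p.2 : ℝ) ^ 2

variable {f r lam}

theorem penalizedLoss_of_residual_eq_zero {x : X} {y : Y} (h : r x y = 0) :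
    penalizedLoss f r lam (x, y) = f x := by
  simp [penalizedLoss, h]

theorem add_le_penalizedLoss_of_residual_ne_zero (hlam : 0 ≤ lam) {x : X} {y : Y}
    (h : r x y ≠ 0) : f x + lam ≤ penalizedLoss f r lam (x, y) := by
  have hsq : (1 : ℝ) ≤ (r x y : ℝ) ^ 2 := by
    have : (1 : ℤ) ≤ r x y ^ 2 := by
      rw [← sq_abs]
      exact one_le_pow₀ (Int.one_le_abs h)
    exact_mod_cast this
  unfold penalizedLoss
  nlinarith

variable (hlam : ∀ x x', f x - f x' < lam) {xs : X} {ys : Y} (hys : r xs ys = 0)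
include hlam hys

theorem penalizedLoss_le_of_residual_eq_zero {F : X → Prop}
    (hF : ∀ x y, r x y = 0 → F x) (hmin : ∀ x, F x → f xs ≤ f x) (q : X × Y) :
    penalizedLoss f r lam (xs, ys) ≤ penalizedLoss f r lam q := by
  rw [penalizedLoss_of_residual_eq_zero hys]
  by_cases hq : r q.1 q.2 = 0
  · rw [penalizedLoss_of_residual_eq_zero hq]
    exact hmin q.1 (hF _ _ hq)
  · have hlam₀ : 0 ≤ lam := by linarith [hlam xs xs]
    have := add_le_penalizedLoss_of_residual_ne_zero (f := f) hlam₀ hq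
    linarith [hlam xs q.1]

theorem residual_eq_zero_of_isMinimizer {p : X × Y}
    (hp : ∀ q, penalizedLoss f r lam p ≤ penalizedLoss f r lam q) : r p.1 p.2 = 0 := by
  by_contra hne
  have hlam₀ : 0 ≤ lam := by linarith [hlam xs xs]
  have h₁ := add_le_penalizedLoss_of_residual_ne_zero (f := f) hlam₀ hne
  have h₂ := hp (xs, ys)
  rw [penalizedLoss_of_residual_eq_zero hys] at h₂
  linarith [hlam xs p.1]

end ExactPenalty

theorem slack_penalty_recovers_optimum_general {n N : ℕ} (f : (Fin n → Fin 2) → ℝ)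
    (a : Fin n → ℤ) (b : ℤ) (ha : ∀ j, 0 ≤ a j)
    (hN : (2 : ℤ) ^ N > b) (lam : ℝ)
    (hlam : ∀ x y, lam > f x - f y)
    (hfeas : ∃ x : Fin n → Fin 2, (∑ j, a j * ((x j : ℕ) : ℤ)) ≤ b) :
    let Lsl : (Fin n → Fin 2) × (Fin N → Fin 2) → ℝ := fun p =>
      f p.1 + lam * ((((∑ j, a j * ((p.1 j : ℕ) : ℤ))
        + (∑ l : Fin N, (2 : ℤ) ^ (l : ℕ) * ((p.2 l : ℕ) : ℤ)) - b : ℤ) : ℝ)) ^ 2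
    (∀ p, (∀ q, Lsl p ≤ Lsl q) → (∑ j, a j * ((p.1 j : ℕ) : ℤ)) ≤ b) ∧
    (∃ p, (∀ q, Lsl p ≤ Lsl q) ∧ Lsl p = f p.1 ∧
      (∑ j, a j * ((p.1 j : ℕ) : ℤ)) ≤ b ∧
      ∀ x, (∑ j, a j * ((x j : ℕ) : ℤ)) ≤ b → f p.1 ≤ f x) := by
  intro Lsl
  set A : (Fin n → Fin 2) → ℤ := fun x => ∑ j, a j * ((x j : ℕ) : ℤ)
  set S : (Fin N → Fin 2) → ℤ := fun y => ∑ l : Fin N, (2 : ℤ) ^ (l : ℕ) * ((y l : ℕ) : ℤ)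
  have hA : ∀ x, 0 ≤ A x := fun x => sum_nonneg fun j _ => mul_nonneg (ha j) (by positivity)
  have hS : ∀ y, 0 ≤ S y := fun y => sum_nonneg fun l _ => by positivity
  have hL : Lsl = penalizedLoss f (fun x y => A x + S y - b) lam := rfl
  have hF : ∀ x y, A x + S y - b = 0 → A x ≤ b := fun x y h => by linarith [hS y]
  obtain ⟨xs, hxs, hmin⟩ := Set.exists_min_image {x | A x ≤ b} f (Set.toFinite _) hfeas
  obtain ⟨ys, hys⟩ := exists_sum_two_pow_mul_eq (N := N) (s := b - A xs)
    (sub_nonneg.mpr hxs) (by linarith [hA xs])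
  have hres : A xs + S ys - b = 0 := by linarith
  rw [hL]
  refine ⟨fun p hp => hF _ _ (residual_eq_zero_of_isMinimizer hlam hres hp),
    (xs, ys), penalizedLoss_le_of_residual_eq_zero hlam hres hF hmin,
    penalizedLoss_of_residual_eq_zero hres, hxs, hmin⟩

/-- minimizing the slack-penalized loss
`L(x,y) = f(x) + λ (Σ_j a_j x_j + Σ_l 2^l y_l − b)²` recovers the constrained optimum:
with integer `a_j ≥ 0`, `b ≥ 0`, `2^N > b`, `λ > max f − min f`, and a nonempty
feasible set, every minimizer `(x,y)` has `x` feasible, and the minimum of `L` equals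
`min { f(x) : Σ_j a_j x_j ≤ b }`. -/
theorem slack_penalty_recovers_optimum {n N : ℕ} (f : (Fin n → Fin 2) → ℝ)
    (a : Fin n → ℤ) (b : ℤ) (ha : ∀ j, 0 ≤ a j) (hb : 0 ≤ b)
    (hN : (2 : ℤ) ^ N > b) (lam : ℝ)
    (hlam : ∀ x y, lam > f x - f y)
    (hfeas : ∃ x : Fin n → Fin 2, (∑ j, a j * ((x j : ℕ) : ℤ)) ≤ b) :
    let Lsl : (Fin n → Fin 2) × (Fin N → Fin 2) → ℝ := fun p =>
      f p.1 + lam * ((((∑ j, a j * ((p.1 j : ℕ) : ℤ))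
        + (∑ l : Fin N, (2 : ℤ) ^ (l : ℕ) * ((p.2 l : ℕ) : ℤ)) - b : ℤ) : ℝ)) ^ 2
    (∀ p, (∀ q, Lsl p ≤ Lsl q) → (∑ j, a j * ((p.1 j : ℕ) : ℤ)) ≤ b) ∧
    (∃ p, (∀ q, Lsl p ≤ Lsl q) ∧ Lsl p = f p.1 ∧
      (∑ j, a j * ((p.1 j : ℕ) : ℤ)) ≤ b ∧
      ∀ x, (∑ j, a j * ((x j : ℕ) : ℤ)) ≤ b → f p.1 ≤ f x) :=
  slack_penalty_recovers_optimum_general f a b ha hN lam hlam hfeas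
end
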